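/- arXiv:1001.1963 — 7 statements merged into one kernel-verified Lean document; each statement's English description precedes it below -/
import Mathlib

section
/- Let V be a finite-dimensional real inner product space, W a linear subspace of V, and μ a Borel probability measure on V. Then the characteristic function of μ satisfies |μ̂(v)| = 1 for all v in the orthogonal complement W⊥ if and only if μ = ν * δ(h) for some Borel probability measure ν concentrated on W (ν(W) = 1) and some vector h ∈ W⊥. -/
open MeasureTheory
open scoped MeasureTheory RealInnerProductSpace

/-- The characteristic function of a measure `μ`: `μ̂(v) = ∫ exp(i⟪u,v⟫) μ(du)`. -/
noncomputable def charFun {V : Type*} [NormedAddCommGroup V] [InnerProductSpace ℝ V]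
    [MeasurableSpace V] (μ : Measure V) (v : V) : ℂ :=
  ∫ u, Complex.exp (((⟪u, v⟫ : ℝ) : ℂ) * Complex.I) ∂μ

/-!
If `‖μ̂ v‖ = 1`, equality holds in `‖∫ exp (i⟪u, v⟫) dμ‖ ≤ 1`, so by strict convexity of `ℂ` the
integrand is `μ`-a.e. constant. Applying this to the vectors `v / (n + 1)`, whose phases
eventually stay in `(-π, π]` where `θ ↦ exp (iθ)` is injective, shows that `⟪u, v⟫` itself is
a.e. constant for every `v ∈ Wᗮ`. Hence the projection of `u` onto `Wᗮ` is a.e. a constant `h`,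
and `μ` is the translate by `h` of a measure living on `Wᗮᗮ = W`. Conversely, a measure on `W`
has characteristic function `1` on `Wᗮ`, and translating by `h` only multiplies it by the
unimodular factor `exp (i⟪h, v⟫)`.
-/

open Complex

section

variable {V : Type*} [NormedAddCommGroup V] [InnerProductSpace ℝ V] [MeasurableSpace V]
  {μ : Measure V}

theorem charFun_eq_measureTheory_charFun : _root_.charFun μ = MeasureTheory.charFun μ := rfl

theorem ae_exp_inner_mul_I_eq_charFun [IsProbabilityMeasure μ] {v : V}
    (hv : ‖MeasureTheory.charFun μ v‖ = 1) :
    ∀ᵐ u ∂μ, cexp (⟪u, v⟫ * I) = MeasureTheory.charFun μ v := by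
  have := ae_eq_const_or_norm_integral_lt_of_norm_le_const
    (μ := μ) (.of_forall fun u ↦ (norm_exp_ofReal_mul_I ⟪u, v⟫).le)
  rw [average_eq_integral, ← charFun_apply, hv, probReal_univ, one_mul] at this
  exact this.resolve_right (lt_irrefl 1)

theorem eq_of_forall_exp_inv_succ_mul_mul_I_eq {a b : ℝ}
    (h : ∀ n : ℕ, cexp (↑((n + 1 : ℝ)⁻¹ * a) * I) = cexp (↑((n + 1 : ℝ)⁻¹ * b) * I)) :
    a = b := by
  obtain ⟨n, hn⟩ := exists_nat_gt ((|a| + |b|) / Real.pi)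
  have hpos : (0 : ℝ) < n + 1 := by positivity
  have hbound : |a| + |b| < Real.pi * (n + 1) := by
    rw [div_lt_iff₀ Real.pi_pos] at hn; linarith [Real.pi_pos]
  have him : ∀ x : ℝ, |x| < Real.pi * (n + 1) →
      -Real.pi < (↑((n + 1 : ℝ)⁻¹ * x) * I).im ∧ (↑((n + 1 : ℝ)⁻¹ * x) * I).im ≤ Real.pi := by
    intro x hx
    have : |(n + 1 : ℝ)⁻¹ * x| < Real.pi := by
      rw [abs_mul, abs_inv, abs_of_pos hpos, inv_mul_lt_iff₀ hpos]
      linarith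
    rw [mul_I_im, ofReal_re]
    exact (abs_lt.mp this).imp_right le_of_lt
  have ha := him a (by linarith [abs_nonneg b])
  have hb := him b (by linarith [abs_nonneg a])
  have := ofReal_injective <| mul_right_cancel₀ I_ne_zero <|
    exp_inj_of_neg_pi_lt_of_le_pi ha.1 ha.2 hb.1 hb.2 (h n)
  exact mul_left_cancel₀ (inv_ne_zero hpos.ne') this

theorem exists_ae_inner_eq_of_norm_charFun_smul_eq_one [IsProbabilityMeasure μ] {v : V}
    (hv : ∀ t : ℝ, ‖MeasureTheory.charFun μ (t • v)‖ = 1) : ∃ c : ℝ, ∀ᵐ u ∂μ, ⟪u, v⟫ = c := by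
  have hexp : ∀ᵐ u ∂μ, ∀ n : ℕ,
      cexp (↑((n + 1 : ℝ)⁻¹ * ⟪u, v⟫) * I) = MeasureTheory.charFun μ ((n + 1 : ℝ)⁻¹ • v) :=
    ae_all_iff.mpr fun n ↦ by
      simpa only [real_inner_smul_right] using ae_exp_inner_mul_I_eq_charFun (hv _)
  obtain ⟨u₀, hu₀⟩ := hexp.exists
  exact ⟨⟪u₀, v⟫, hexp.mono fun u hu ↦
    eq_of_forall_exp_inv_succ_mul_mul_I_eq fun n ↦ (hu n).trans (hu₀ n).symm⟩

theorem exists_mem_ae_starProjection_eq (K : Submodule ℝ V) [FiniteDimensional ℝ K]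
    (hK : ∀ v ∈ K, ∃ c : ℝ, ∀ᵐ u ∂μ, ⟪u, v⟫ = c) :
    ∃ h ∈ K, ∀ᵐ u ∂μ, K.starProjection u = h := by
  let b := stdOrthonormalBasis ℝ K
  choose c hc using fun i ↦ hK (b i) (b i).2
  refine ⟨∑ i, c i • (b i : V), K.sum_mem fun i _ ↦ K.smul_mem _ (b i).2, ?_⟩
  filter_upwards [ae_all_iff.mpr hc] with u hu
  simp [b.starProjection_eq_sum_rankOne, real_inner_comm, hu]

theorem charFun_eq_one_of_ae_inner_eq_zero [IsProbabilityMeasure μ] {v : V}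
    (hv : ∀ᵐ u ∂μ, ⟪u, v⟫ = 0) : MeasureTheory.charFun μ v = 1 := by
  rw [charFun_apply, integral_congr_ae (g := fun _ ↦ 1) (hv.mono fun u hu ↦ by simp [hu])]
  simp

end

theorem map_sub_conv_dirac {G : Type*} [AddGroup G] [MeasurableSpace G] [MeasurableAdd₂ G]
    [MeasurableSub G] (μ : Measure G) [SFinite μ] (h : G) :
    μ.map (· - h) ∗ Measure.dirac h = μ := by
  rw [Measure.conv_dirac, Measure.map_map (by fun_prop) (by fun_prop)]
  simp [Function.comp_def]

/-- **Lemma 1.** For a Borel probability measure `μ` on a finite-dimensional real inner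
product space `V` and a subspace `W`, `|μ̂(v)| = 1` for all `v ∈ W⊥` iff
`μ = ν ∗ δ(h)` with `ν` concentrated on `W` and `h ∈ W⊥`. -/
theorem charFun_norm_one_on_orthogonal_iff
    {V : Type*} [NormedAddCommGroup V] [InnerProductSpace ℝ V]
    [FiniteDimensional ℝ V] [MeasurableSpace V] [BorelSpace V]
    (W : Submodule ℝ V) (μ : Measure V) [IsProbabilityMeasure μ] :
    (∀ v ∈ Wᗮ, ‖_root_.charFun μ v‖ = 1) ↔
      ∃ (ν : Measure V) (h : V), IsProbabilityMeasure ν ∧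
        ν (W : Set V) = 1 ∧ h ∈ Wᗮ ∧ μ = ν ∗ Measure.dirac h := by
  rw [charFun_eq_measureTheory_charFun]
  have hW : MeasurableSet (W : Set V) := W.closed_of_finiteDimensional.measurableSet
  constructor
  · intro hμ
    obtain ⟨h, hhW, hPh⟩ := exists_mem_ae_starProjection_eq Wᗮ fun v hv ↦
      exists_ae_inner_eq_of_norm_charFun_smul_eq_one fun t ↦ hμ _ (Wᗮ.smul_mem t hv)
    have hae : ∀ᵐ u ∂μ, u - h ∈ W := by
      filter_upwards [hPh] with u hu
      simpa only [hu, Submodule.orthogonal_orthogonal] using Wᗮ.sub_starProjection_mem_orthogonal u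
    refine ⟨μ.map (· - h), h, Measure.isProbabilityMeasure_map (by fun_prop), ?_, hhW,
      (map_sub_conv_dirac μ h).symm⟩
    rw [Measure.map_apply (by fun_prop) hW]
    exact (mem_ae_iff_prob_eq_one (hW.preimage (by fun_prop))).mp hae
  · rintro ⟨ν, h, hν, hνW, -, rfl⟩ v hv
    have hνW' : ∀ᵐ u ∂ν, u ∈ W := (mem_ae_iff_prob_eq_one hW).mpr hνW
    have hν0 : ∀ᵐ u ∂ν, ⟪u, v⟫ = 0 :=
      hνW'.mono fun u hu ↦ Submodule.inner_right_of_mem_orthogonal hu hv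
    rw [charFun_conv, charFun_eq_one_of_ae_inner_eq_zero hν0, charFun_dirac, one_mul,
      norm_exp_ofReal_mul_I]
end

section
/- Let V be a finite-dimensional real inner product space, W a subspace of V, and μ, ν, λ Borel probability measures on V with μ = ν * λ. If μ is concentrated on W (μ(W)=1), then there exist probability measures ν₁, λ₁ concentrated on W and a vector h ∈ W⊥ such that ν = ν₁ * δ(h) and λ = λ₁ * δ(−h). -/
open MeasureTheory
open scoped MeasureTheory RealInnerProductSpace

/-!
Since `μ = ν ∗ λ` charges only `W`, for `ν`-a.e. `x` we have `x + y ∈ W` for `λ`-a.e. `y`.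
Fixing one such `c`, any other such `x` shares a `y` with it, so `x - c ∈ W`: `ν` lives on the
coset `c + W` and `λ` on `-c + W`. Replacing `c` by its component `h` orthogonal to `W` leaves
these cosets unchanged, and translating by `∓h` moves both measures onto `W`.
-/

namespace MeasureTheory.Measure

variable {G : Type*} [MeasurableSpace G]

lemma map_apply_eq_one_iff {α : Type*} [MeasurableSpace α] {μ : Measure α}
    [IsProbabilityMeasure μ] {f : α → G} (hf : Measurable f) {s : Set G}
    (hs : MeasurableSet s) :
    μ.map f s = 1 ↔ ∀ᵐ x ∂μ, f x ∈ s := by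
  rw [map_apply hf hs, ← mem_ae_iff_prob_eq_one (hf hs)]
  rfl

variable [AddCommGroup G] {ν lam : Measure G}

lemma ae_ae_add_mem_of_conv_apply_eq_one [MeasurableAdd₂ G]
    [IsProbabilityMeasure ν] [IsProbabilityMeasure lam] {s : Set G}
    (hs : MeasurableSet s) (h : (ν ∗ lam) s = 1) :
    ∀ᵐ x ∂ν, ∀ᵐ y ∂lam, x + y ∈ s :=
  ae_ae_of_ae_prod <| (map_apply_eq_one_iff measurable_add hs).1 h

lemma exists_ae_sub_mem_and_ae_add_mem [NeZero ν] [NeZero lam]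
    {S : Type*} [SetLike S G] [AddSubgroupClass S G] {H : S}
    (h : ∀ᵐ x ∂ν, ∀ᵐ y ∂lam, x + y ∈ H) :
    ∃ c, (∀ᵐ x ∂ν, x - c ∈ H) ∧ ∀ᵐ y ∂lam, y + c ∈ H := by
  obtain ⟨c, hc⟩ := h.exists
  refine ⟨c, ?_, hc.mono fun y hy ↦ by rwa [add_comm]⟩
  filter_upwards [h] with x hx
  obtain ⟨y, hxy, hcy⟩ := (hx.and hc).exists
  simpa using sub_mem hxy hcy

end MeasureTheory.Measure

theorem decomposition_of_measure_concentrated_on_subspace_general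
    {V : Type*} [NormedAddCommGroup V] [InnerProductSpace ℝ V]
    [FiniteDimensional ℝ V] [MeasurableSpace V] [BorelSpace V]
    (W : Submodule ℝ V) (μ ν lam : Measure V)
    [IsProbabilityMeasure ν] [IsProbabilityMeasure lam]
    (hconv : μ = ν ∗ lam) (hW : μ (W : Set V) = 1) :
    ∃ (ν₁ lam₁ : Measure V) (h : V), IsProbabilityMeasure ν₁ ∧ IsProbabilityMeasure lam₁ ∧
      ν₁ (W : Set V) = 1 ∧ lam₁ (W : Set V) = 1 ∧ h ∈ Wᗮ ∧
      ν = ν₁ ∗ Measure.dirac h ∧ lam = lam₁ ∗ Measure.dirac (-h) := by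
  have hWmeas : MeasurableSet (W : Set V) := W.closed_of_finiteDimensional.measurableSet
  obtain ⟨c, hν, hlam⟩ := Measure.exists_ae_sub_mem_and_ae_add_mem
    (Measure.ae_ae_add_mem_of_conv_apply_eq_one hWmeas (hconv ▸ hW))
  set h := c - W.starProjection c
  have hch : c - h ∈ W := by simp [h]
  refine ⟨ν.map (· - h), lam.map (· + h), h, Measure.isProbabilityMeasure_map (by fun_prop),
    Measure.isProbabilityMeasure_map (by fun_prop), ?_, ?_,
    W.sub_starProjection_mem_orthogonal c, ?_, ?_⟩
  · rw [Measure.map_apply_eq_one_iff (by fun_prop) hWmeas]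
    filter_upwards [hν] with x hx
    simpa using add_mem hx hch
  · rw [Measure.map_apply_eq_one_iff (by fun_prop) hWmeas]
    filter_upwards [hlam] with y hy
    simpa [sub_sub_eq_add_sub, add_sub_assoc] using sub_mem hy hch
  · rw [Measure.conv_dirac, Measure.map_map (by fun_prop) (by fun_prop)]
    simp [Function.comp_def]
  · rw [Measure.conv_dirac, Measure.map_map (by fun_prop) (by fun_prop)]
    simp [Function.comp_def]

/-- **Lemma 2.** If `μ = ν ∗ λ` is concentrated on a subspace `W`, then
`ν = ν₁ ∗ δ(h)` and `λ = λ₁ ∗ δ(−h)` with `ν₁, λ₁` concentrated on `W` and `h ∈ W⊥`. -/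
theorem decomposition_of_measure_concentrated_on_subspace
    {V : Type*} [NormedAddCommGroup V] [InnerProductSpace ℝ V]
    [FiniteDimensional ℝ V] [MeasurableSpace V] [BorelSpace V]
    (W : Submodule ℝ V) (μ ν lam : Measure V)
    [IsProbabilityMeasure μ] [IsProbabilityMeasure ν] [IsProbabilityMeasure lam]
    (hconv : μ = ν ∗ lam) (hW : μ (W : Set V) = 1) :
    ∃ (ν₁ lam₁ : Measure V) (h : V), IsProbabilityMeasure ν₁ ∧ IsProbabilityMeasure lam₁ ∧
      ν₁ (W : Set V) = 1 ∧ lam₁ (W : Set V) = 1 ∧ h ∈ Wᗮ ∧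
      ν = ν₁ ∗ Measure.dirac h ∧ lam = lam₁ ∗ Measure.dirac (-h) :=
  decomposition_of_measure_concentrated_on_subspace_general W μ ν lam hconv hW
end

section
/- Let V be a finite-dimensional real vector space, A ∈ End V a linear operator, and μ, ν, λ probability measures on V with μ = Aν * λ. If W is the supporting subspace of μ and U is the supporting subspace of ν, then A(U) ⊆ W. -/
/-!
If `μ = Aν ∗ λ` is concentrated on `w + W`, then by Fubini, for `λ`-almost every `z` the measure
`Aν` is concentrated on `w - z + W`, so `ν` is concentrated on a translate of `A⁻¹(W)`.
Minimality of `U = ssupp(ν)` then gives `U ≤ A⁻¹(W)`.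
-/

open MeasureTheory
open scoped MeasureTheory

/-- `W` is the supporting subspace of `μ`: `μ` is concentrated on some translate `W + x`,
and `W` is the smallest subspace with this property. -/
def IsSuppSubspace {V : Type*} [NormedAddCommGroup V] [NormedSpace ℝ V]
    [MeasurableSpace V] (μ : MeasureTheory.Measure V) (W : Submodule ℝ V) : Prop :=
  (∃ x : V, μ {v | v - x ∈ W} = 1) ∧
    ∀ (W' : Submodule ℝ V) (x : V), μ {v | v - x ∈ W'} = 1 → W ≤ W'

theorem MeasureTheory.Measure.ae_ae_add_of_ae_conv {M : Type*} [AddMonoid M] [MeasurableSpace M]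
    [MeasurableAdd₂ M] {α β : Measure M} [SFinite β] {p : M → Prop}
    (h : ∀ᵐ z ∂(α ∗ β), p z) : ∀ᵐ x ∂α, ∀ᵐ y ∂β, p (x + y) :=
  Measure.ae_ae_of_ae_prod (ae_of_ae_map (by fun_prop) h)

theorem Submodule.exists_eventually_sub_mem_comap {R V V' : Type*} [Ring R] [AddCommGroup V]
    [Module R V] [AddCommGroup V'] [Module R V'] {l : Filter V} [l.NeBot] {A : V →ₗ[R] V'}
    {W : Submodule R V'} {w : V'} (h : ∀ᶠ v in l, A v - w ∈ W) :
    ∃ u, ∀ᶠ v in l, v - u ∈ W.comap A := by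
  obtain ⟨u, hu⟩ := h.exists
  refine ⟨u, h.mono fun v hv => ?_⟩
  rw [Submodule.mem_comap, map_sub, ← sub_sub_sub_cancel_right (A v) (A u) w]
  exact W.sub_mem hv hu

theorem Submodule.measure_sub_mem_eq_one_iff {V : Type*} [NormedAddCommGroup V] [NormedSpace ℝ V]
    [FiniteDimensional ℝ V] [MeasurableSpace V] [BorelSpace V] {μ : Measure V}
    [IsProbabilityMeasure μ] (W : Submodule ℝ V) (x : V) :
    μ {v | v - x ∈ W} = 1 ↔ ∀ᵐ v ∂μ, v - x ∈ W :=
  (mem_ae_iff_prob_eq_one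
    (measurable_sub_const x W.closed_of_finiteDimensional.measurableSet)).symm

/-- **Proposition 3.** If `μ = Aν ∗ λ`, `W = ssupp(μ)` and `U = ssupp(ν)`, then `A(U) ⊆ W`. -/
theorem map_suppSubspace_le_of_conv
    {V : Type*} [NormedAddCommGroup V] [NormedSpace ℝ V]
    [FiniteDimensional ℝ V] [MeasurableSpace V] [BorelSpace V]
    (A : V →ₗ[ℝ] V) (μ ν lam : Measure V)
    [IsProbabilityMeasure μ] [IsProbabilityMeasure ν] [IsProbabilityMeasure lam]
    (hconv : μ = (ν.map A) ∗ lam)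
    (W U : Submodule ℝ V) (hW : IsSuppSubspace μ W) (hU : IsSuppSubspace ν U) :
    U.map A ≤ W := by
  obtain ⟨⟨w, hw⟩, -⟩ := hW
  rw [W.measure_sub_mem_eq_one_iff, hconv, Measure.conv_comm] at hw
  obtain ⟨z, hz⟩ := (Measure.ae_ae_add_of_ae_conv hw).exists
  have hA : Measurable A := A.continuous_of_finiteDimensional.measurable
  have hν : ∀ᵐ v ∂ν, A v - (w - z) ∈ W := by
    filter_upwards [ae_of_ae_map hA.aemeasurable hz] with v hv
    rwa [sub_sub_eq_add_sub, add_comm (A v)]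
  obtain ⟨u, hu⟩ := Submodule.exists_eventually_sub_mem_comap hν
  rw [← Submodule.measure_sub_mem_eq_one_iff] at hu
  exact Submodule.map_le_iff_le_comap.mpr (hU.2 _ u hu)
end

section
/- Let μ be a probability measure on a finite-dimensional real vector space V. Then there exists h' ∈ V such that μ * δ(h') = S(μ * δ(h')) for every symmetry S of μ, i.e., for every S ∈ End V with μ = Sμ * δ(h) for some h ∈ V. -/
/-!
Through `x ↦ (x, 1)`, a symmetry `x ↦ S x + h` of `μ` becomes a linear map of `V × ℝ` preserving
the image measure `ν`, and its fixed points become its fixed vectors with last coordinate `1`.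
On the smallest subspace `U` carrying `ν`, the linear maps preserving `ν` are invertible and form
a compact group: a sequence of them tending to infinity would, after normalisation, converge to a
nonzero operator whose kernel carries `ν`, since measure-preserving maps cannot send a set of
positive measure to infinity. The Haar average of the orbit of a point of `U` with last
coordinate `1` is then a common fixed vector.
-/

open MeasureTheory Filter Topology
open scoped BoundedContinuousFunction

theorem exists_fixed_mem_of_compactSpace {G F : Type*} [Group G] [TopologicalSpace G]
    [IsTopologicalGroup G] [CompactSpace G] [NormedAddCommGroup F] [NormedSpace ℝ F]
    [CompleteSpace F] (ρ : G →* F →L[ℝ] F) (hρ : Continuous ρ) {s : Set F} (hs : Convex ℝ s)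
    (hsc : IsClosed s) {x : F} (hx : ∀ g, ρ g x ∈ s) : ∃ w ∈ s, ∀ g, ρ g w = w := by
  borelize G
  let κ : Measure G := Measure.haarMeasure ⊤
  have : IsProbabilityMeasure κ := ⟨Measure.haarMeasure_self⟩
  have hint : Integrable (fun g ↦ ρ g x) κ :=
    (hρ.clm_apply continuous_const).integrable_of_hasCompactSupport
      (HasCompactSupport.of_compactSpace _)
  refine ⟨∫ g, ρ g x ∂κ, hs.integral_mem hsc (ae_of_all _ hx) hint, fun g ↦ ?_⟩
  calc ρ g (∫ h, ρ h x ∂κ) = ∫ h, ρ (g * h) x ∂κ := by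
        simp only [map_mul, mul_apply_eq_comp, (ρ g).integral_comp_comm hint]
    _ = ∫ h, ρ h x ∂κ := integral_mul_left_eq_self (fun h ↦ ρ h x) g

theorem measure_setOf_tendsto_norm_atTop_eq_zero {α E : Type*} [MeasurableSpace α]
    [NormedAddCommGroup E] [MeasurableSpace E] [OpensMeasurableSpace E] {μ : Measure α}
    {ν : Measure E} [IsFiniteMeasure ν] {f : ℕ → α → E} (hf : ∀ k, Measurable (f k))
    (hmap : ∀ k, μ.map (f k) = ν) :
    μ {x | Tendsto (fun k ↦ ‖f k x‖) atTop atTop} = 0 := by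
  set A := {x | Tendsto (fun k ↦ ‖f k x‖) atTop atTop}
  have hA : ∀ n : ℕ, μ A ≤ ν (Metric.closedBall 0 n)ᶜ := by
    intro n
    have hsub : A ⊆ ⋃ m, {x | ∀ k ≥ m, n < ‖f k x‖} := fun x hx ↦ Set.mem_iUnion.2
      ((tendsto_atTop.1 hx (n + 1)).exists_forall_of_atTop.imp fun m hm k hk ↦ by
        linarith [hm k hk])
    have hmono : Monotone fun m ↦ {x | ∀ k ≥ m, (n : ℝ) < ‖f k x‖} :=
      fun m m' hm x hx k hk ↦ hx k (hm.trans hk)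
    refine (measure_mono hsub).trans ?_
    rw [hmono.measure_iUnion]
    refine iSup_le fun m ↦ (measure_mono fun x hx ↦ ?_).trans_eq (hmap m ▸
      Measure.map_apply (hf m) measurableSet_closedBall.compl).symm
    simpa using hx m le_rfl
  have hinter : ν (⋂ n : ℕ, (Metric.closedBall (0 : E) n)ᶜ) = 0 := by
    rw [← Set.compl_iUnion, Metric.iUnion_closedBall_nat, Set.compl_univ, measure_empty]
  rw [Antitone.measure_iInter (fun m n hmn ↦ Set.compl_subset_compl.2
      (Metric.closedBall_subset_closedBall (Nat.cast_le.2 hmn)))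
    (fun n ↦ measurableSet_closedBall.compl.nullMeasurableSet) ⟨0, measure_ne_top _ _⟩] at hinter
  exact le_antisymm (hinter ▸ le_iInf hA) zero_le

section LinearSymmetries

variable {E : Type*} [NormedAddCommGroup E] [NormedSpace ℝ E] [MeasurableSpace E]

/-- For the image of `μ` under `x ↦ (x, 1)`, this is Jurek's fullness of `μ`: no proper affine
subspace carries `μ`. -/
def LinearlyFull (ν : Measure E) : Prop :=
  ∀ P : Submodule ℝ E, (∀ᵐ x ∂ν, x ∈ P) → P = ⊤

lemma LinearlyFull.eq_of_ae_eq {ν : Measure E} (hν : LinearlyFull ν) {F : Type*}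
    [AddCommGroup F] [Module ℝ F] {f g : E →ₗ[ℝ] F} (h : f =ᵐ[ν] g) : f = g :=
  sub_eq_zero.1 <| LinearMap.ker_eq_top.1 <| hν _ <| h.mono fun x hx ↦ by simp [hx]

def IsLinearSupport (ν : Measure E) (U : Submodule ℝ E) : Prop :=
  ∀ P : Submodule ℝ E, (∀ᵐ x ∂ν, x ∈ P) ↔ U ≤ P

lemma IsLinearSupport.ae_mem {ν : Measure E} {U : Submodule ℝ E} (hU : IsLinearSupport ν U) :
    ∀ᵐ x ∂ν, x ∈ U :=
  (hU U).2 le_rfl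

lemma exists_isLinearSupport [FiniteDimensional ℝ E] (ν : Measure E) :
    ∃ U, IsLinearSupport ν U := by
  obtain ⟨U, hU, hmin⟩ := wellFounded_lt.has_min {P : Submodule ℝ E | ∀ᵐ x ∂ν, x ∈ P}
    ⟨⊤, ae_of_all _ fun _ ↦ trivial⟩
  have hU : ∀ᵐ x ∂ν, x ∈ U := hU
  refine ⟨U, fun P ↦ ⟨fun hP ↦ ?_, fun hUP ↦ hU.mono fun x hx ↦ hUP hx⟩⟩
  exact inf_eq_left.1 (eq_of_le_of_not_lt inf_le_left (hmin _ (hU.and hP)))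

variable [BorelSpace E]

lemma isClosed_setOf_map_eq {F : Type*} [NormedAddCommGroup F] [NormedSpace ℝ F]
    [MeasurableSpace F] [BorelSpace F] (ν : Measure E) [IsFiniteMeasure ν] (ν' : Measure F)
    [IsFiniteMeasure ν'] : IsClosed {T : E →L[ℝ] F | ν.map T = ν'} := by
  have : {T : E →L[ℝ] F | ν.map T = ν'} =
      ⋂ f : F →ᵇ ℝ, {T | ∫ x, f (T x) ∂ν = ∫ y, f y ∂ν'} := by
    ext T
    simp only [Set.mem_ofPred_eq, Set.mem_iInter]
    refine ⟨fun h f ↦ ?_, fun h ↦ ext_of_forall_integral_eq_of_IsFiniteMeasure fun f ↦ ?_⟩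
    · rw [← h, integral_map T.continuous.aemeasurable f.continuous.aestronglyMeasurable]
    · rw [integral_map T.continuous.aemeasurable f.continuous.aestronglyMeasurable, h]
  rw [this]
  refine isClosed_iInter fun f ↦ isClosed_eq ?_ continuous_const
  refine continuous_of_dominated (bound := fun _ ↦ ‖f‖) (fun T ↦ ?_)
    (fun T ↦ ae_of_all _ fun x ↦ f.norm_coe_le_norm _) (integrable_const _)
    (ae_of_all _ fun x ↦ f.continuous.comp (continuous_id.clm_apply continuous_const))
  exact (f.continuous.comp T.continuous).aestronglyMeasurable

def linearStabilizer (ν : Measure E) : Subgroup (E →L[ℝ] E)ˣ where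
  carrier := {u | ν.map (u : E →L[ℝ] E) = ν}
  mul_mem' {u v} hu hv := by
    simp only [Set.mem_ofPred_eq, Units.val_mul, ContinuousLinearMap.mul_def,
      ContinuousLinearMap.coe_comp] at *
    rw [← Measure.map_map u.val.continuous.measurable v.val.continuous.measurable, hv, hu]
  one_mem' := by simp
  inv_mem' {u} hu := by
    simp only [Set.mem_ofPred_eq] at *
    conv_lhs => rw [← hu]
    rw [Measure.map_map (u⁻¹).val.continuous.measurable u.val.continuous.measurable,
      ← ContinuousLinearMap.coe_comp, ← ContinuousLinearMap.mul_def, Units.inv_mul,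
      ContinuousLinearMap.one_def, ContinuousLinearMap.coe_id', Measure.map_id]

variable [FiniteDimensional ℝ E]

lemma LinearlyFull.surjective_of_map_eq {ν : Measure E} (hν : LinearlyFull ν) {T : E →ₗ[ℝ] E}
    (hT : ν.map T = ν) : Function.Surjective T := by
  refine LinearMap.range_eq_top.1 (hν _ ?_)
  rw [← hT]
  exact ae_map_mem_range T (LinearMap.range T).closed_of_finiteDimensional.measurableSet ν

lemma LinearlyFull.isBounded_setOf_map_eq {ν : Measure E} [IsFiniteMeasure ν]
    (hν : LinearlyFull ν) : Bornology.IsBounded {T : E →L[ℝ] E | ν.map T = ν} := by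
  by_contra hunb
  simp only [isBounded_iff_forall_norm_le, not_exists, not_forall, not_le] at hunb
  choose T hT hTn using fun n : ℕ ↦ hunb n
  have hpos : ∀ n, 0 < ‖T n‖ := fun n ↦ (Nat.cast_nonneg n).trans_lt (hTn n)
  obtain ⟨L, hL, φ, hφ, hlim⟩ := (isCompact_sphere (0 : E →L[ℝ] E) 1).tendsto_subseq
    (x := fun n ↦ ‖T n‖⁻¹ • T n) fun n ↦ by simp [norm_smul, (hpos n).ne']
  have hnorm : Tendsto (fun k ↦ ‖T (φ k)‖) atTop atTop :=
    tendsto_atTop_mono (fun k ↦ (hTn (φ k)).le)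
      (tendsto_natCast_atTop_atTop.comp hφ.tendsto_atTop)
  have hker : ∀ᵐ x ∂ν, x ∈ LinearMap.ker (L : E →ₗ[ℝ] E) := by
    refine ae_iff.2 <| measure_mono_null (fun x hx ↦ ?_) <|
      measure_setOf_tendsto_norm_atTop_eq_zero (fun k ↦ (T (φ k)).continuous.measurable)
        fun k ↦ hT (φ k)
    have hLx : 0 < ‖L x‖ := norm_pos_iff.2 hx
    have hLk : Tendsto (fun k ↦ ‖(‖T (φ k)‖⁻¹ • T (φ k)) x‖) atTop (𝓝 ‖L x‖) :=
      ((continuous_norm.comp (ContinuousLinearMap.apply ℝ E x).continuous).tendsto L).comp hlim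
    refine (hnorm.atTop_mul_pos hLx hLk).congr fun k ↦ ?_
    simp [norm_smul, (hpos (φ k)).ne']
  have hL0 : L = 0 := ContinuousLinearMap.coe_injective (LinearMap.ker_eq_top.1 (hν _ hker))
  simp [hL0] at hL

lemma LinearlyFull.compactSpace_linearStabilizer {ν : Measure E} [IsFiniteMeasure ν]
    (hν : LinearlyFull ν) : CompactSpace (linearStabilizer ν) := by
  refine isCompact_iff_compactSpace.1 ?_
  rw [Units.isOpenEmbedding_val.isCompact_iff]
  have : Units.val '' (linearStabilizer ν : Set (E →L[ℝ] E)ˣ) =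
      {T : E →L[ℝ] E | ν.map T = ν} := by
    refine Set.Subset.antisymm (Set.image_subset_iff.2 fun u hu ↦ hu) fun T hT ↦ ?_
    have hsurj := hν.surjective_of_map_eq (T := T) hT
    obtain ⟨u, rfl⟩ := ContinuousLinearMap.isUnit_iff_bijective.2
      ⟨LinearMap.injective_iff_surjective.2 hsurj, hsurj⟩
    exact ⟨u, hT, rfl⟩
  rw [this]
  exact Metric.isCompact_of_isClosed_isBounded (isClosed_setOf_map_eq ν ν)
    hν.isBounded_setOf_map_eq

section Support

variable {ν : Measure E} {U : Submodule ℝ E}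

lemma measurableEmbedding_subtype_coe_submodule (U : Submodule ℝ E) :
    MeasurableEmbedding ((↑) : U → E) :=
  MeasurableEmbedding.subtype_coe U.closed_of_finiteDimensional.measurableSet

lemma map_coe_comap_coe (hU : ∀ᵐ x ∂ν, x ∈ U) : (ν.comap ((↑) : U → E)).map (↑) = ν := by
  rw [(measurableEmbedding_subtype_coe_submodule U).map_comap, Subtype.range_coe,
    Measure.restrict_eq_self_of_ae_mem hU]

lemma ae_comap_coe_iff (hU : ∀ᵐ x ∂ν, x ∈ U) {p : E → Prop} :
    (∀ᵐ x : U ∂(ν.comap ((↑) : U → E)), p x) ↔ ∀ᵐ x ∂ν, p x := by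
  conv_rhs => rw [← map_coe_comap_coe hU]
  exact ((measurableEmbedding_subtype_coe_submodule U).ae_map_iff).symm

lemma IsLinearSupport.linearlyFull_comap (hU : IsLinearSupport ν U) :
    LinearlyFull (ν.comap ((↑) : U → E)) := by
  intro P hP
  have hle : U ≤ P.map U.subtype :=
    (hU _).1 <| (ae_comap_coe_iff hU.ae_mem).1 (hP.mono fun x hx ↦ ⟨x, hx, rfl⟩)
  refine eq_top_iff.2 fun x _ ↦ ?_
  obtain ⟨y, hy, hyx⟩ := hle x.2
  exact Subtype.ext hyx ▸ hy

lemma IsLinearSupport.le_comap_of_map_eq (hU : IsLinearSupport ν U)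
    {T : E →ₗ[ℝ] E} (hT : ν.map T = ν) : U ≤ U.comap T := by
  refine (hU _).1 (ae_of_ae_map (LinearMap.continuous_of_finiteDimensional T).aemeasurable ?_)
  rw [hT]
  exact hU.ae_mem

lemma IsLinearSupport.map_restrict_comap (hU : IsLinearSupport ν U)
    {T : E →ₗ[ℝ] E} (hT : ν.map T = ν) :
    (ν.comap ((↑) : U → E)).map (T.restrict (hU.le_comap_of_map_eq hT)) =
      ν.comap ((↑) : U → E) := by
  set TU := T.restrict (hU.le_comap_of_map_eq hT)
  have hTU : Measurable TU := (LinearMap.continuous_of_finiteDimensional TU).measurable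
  have hTm : Measurable T := (LinearMap.continuous_of_finiteDimensional T).measurable
  have hcoe : Measurable ((↑) : U → E) := measurable_subtype_coe
  calc (ν.comap ((↑) : U → E)).map TU
      = (((ν.comap ((↑) : U → E)).map TU).map (↑)).comap ((↑) : U → E) :=
        ((measurableEmbedding_subtype_coe_submodule U).comap_map _).symm
    _ = (((ν.comap ((↑) : U → E)).map (↑)).map T).comap ((↑) : U → E) := by
        rw [Measure.map_map hcoe hTU, Measure.map_map hTm hcoe]; rfl
    _ = ν.comap ((↑) : U → E) := by rw [map_coe_comap_coe hU.ae_mem, hT]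

lemma IsLinearSupport.apply_eq_of_forall_mem_linearStabilizer
    (hU : IsLinearSupport ν U) {T : E →ₗ[ℝ] E} (hT : ν.map T = ν)
    {w : U} (hw : ∀ u ∈ linearStabilizer (ν.comap ((↑) : U → E)), (u : U →L[ℝ] U) w = w) :
    T w = w := by
  have hmap := hU.map_restrict_comap hT
  have hsurj := hU.linearlyFull_comap.surjective_of_map_eq hmap
  obtain ⟨u, hu⟩ := (ContinuousLinearMap.isUnit_iff_bijective
    (f := (T.restrict (hU.le_comap_of_map_eq hT)).toContinuousLinearMap)).2
    ⟨LinearMap.injective_iff_surjective.2 hsurj, hsurj⟩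
  have hfix := hw u (show _ = _ by rw [hu]; exact hmap)
  rw [hu] at hfix
  exact congrArg Subtype.val hfix

end Support

theorem exists_fixed_of_ae_eq_one (ν : Measure E) [IsFiniteMeasure ν] [NeZero ν]
    (ℓ : E →ₗ[ℝ] ℝ) (hℓ : ∀ᵐ x ∂ν, ℓ x = 1) :
    ∃ w, ℓ w = 1 ∧ ∀ T : E →ₗ[ℝ] E, ν.map T = ν → T w = w := by
  obtain ⟨U, hU⟩ := exists_isLinearSupport ν
  set νU := ν.comap ((↑) : U → E)
  have hfull : LinearlyFull νU := hU.linearlyFull_comap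
  have : CompactSpace (linearStabilizer νU) := hfull.compactSpace_linearStabilizer
  set ℓU := ℓ ∘ₗ U.subtype
  have hℓU : ∀ᵐ x ∂νU, ℓU x = 1 := (ae_comap_coe_iff hU.ae_mem).2 hℓ
  have horbit : ∀ u ∈ linearStabilizer νU, ℓU ∘ₗ (u : U →L[ℝ] U) = ℓU := fun u hu ↦
    hfull.eq_of_ae_eq <| ((ae_of_ae_map (u : U →L[ℝ] U).continuous.aemeasurable
      (hu.symm ▸ hℓU)).and hℓU).mono fun x hx ↦ hx.1.trans hx.2.symm
  obtain ⟨x₀, hx₀U, hx₀⟩ := (hU.ae_mem.and hℓ).exists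
  obtain ⟨w, hw, hfix⟩ := exists_fixed_mem_of_compactSpace
    ((Units.coeHom (U →L[ℝ] U)).comp (linearStabilizer νU).subtype)
    (Units.continuous_val.comp continuous_subtype_val)
    ((convex_singleton 1).linear_preimage ℓU)
    (isClosed_singleton.preimage (LinearMap.continuous_of_finiteDimensional ℓU))
    (x := ⟨x₀, hx₀U⟩) fun g ↦ (LinearMap.congr_fun (horbit g g.2) _).trans hx₀
  exact ⟨w, hw, fun T hT ↦ hU.apply_eq_of_forall_mem_linearStabilizer hT fun u hu ↦ hfix ⟨u, hu⟩⟩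

end LinearSymmetries

theorem exists_fixed_of_map_add_eq {V : Type*} [NormedAddCommGroup V] [NormedSpace ℝ V]
    [FiniteDimensional ℝ V] [MeasurableSpace V] [BorelSpace V] (μ : Measure V)
    [IsFiniteMeasure μ] [NeZero μ] :
    ∃ w : V, ∀ (S : V →ₗ[ℝ] V) (h : V), μ.map (fun x ↦ S x + h) = μ → S w + h = w := by
  have hlift : Measurable fun x : V ↦ (x, (1 : ℝ)) := measurable_id.prodMk measurable_const
  set ν := μ.map fun x : V ↦ (x, (1 : ℝ))
  have : NeZero ν := ⟨(Measure.map_ne_zero_iff hlift.aemeasurable).2 (NeZero.ne μ)⟩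
  have hν : ∀ᵐ p ∂ν, LinearMap.snd ℝ V ℝ p = 1 :=
    (ae_map_iff hlift.aemeasurable ((measurableSet_singleton 1).preimage measurable_snd)).2
      (ae_of_all _ fun _ ↦ rfl)
  obtain ⟨w, hw1, hfix⟩ := exists_fixed_of_ae_eq_one ν _ hν
  refine ⟨w.1, fun S h hS ↦ ?_⟩
  let T : V × ℝ →ₗ[ℝ] V × ℝ :=
    (S ∘ₗ LinearMap.fst ℝ V ℝ + (LinearMap.snd ℝ V ℝ).smulRight h).prod (LinearMap.snd ℝ V ℝ)
  have hSm : Measurable (fun x ↦ S x + h) :=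
    (LinearMap.continuous_of_finiteDimensional S).measurable.add_const h
  have hT : ν.map T = ν := by
    have hcomm : T ∘ (fun x : V ↦ (x, (1 : ℝ))) = (fun x ↦ (x, 1)) ∘ fun x ↦ S x + h := by
      ext x <;> simp [T]
    rw [Measure.map_map (LinearMap.continuous_of_finiteDimensional T).measurable hlift, hcomm,
      ← Measure.map_map hlift hSm, hS]
  simpa [T, show w.2 = 1 from hw1] using congrArg Prod.fst (hfix T hT)

/-- **Theorem 4.** For every probability measure `μ` on a finite-dimensional real vector
space there is a vector `h'` such that `μ ∗ δ(h') = S(μ ∗ δ(h'))` for every symmetry `S`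
of `μ`, i.e. every linear operator `S` with `μ = Sμ ∗ δ(h)` for some `h`. -/
theorem exists_universal_centering_symmetries
    {V : Type*} [NormedAddCommGroup V] [NormedSpace ℝ V]
    [FiniteDimensional ℝ V] [MeasurableSpace V] [BorelSpace V]
    (μ : Measure V) [IsProbabilityMeasure μ] :
    ∃ h' : V, ∀ S : V →ₗ[ℝ] V,
      (∃ h : V, μ = (μ.map S) ∗ Measure.dirac h) →
      μ ∗ Measure.dirac h' = (μ ∗ Measure.dirac h').map S := by
  obtain ⟨w, hw⟩ := exists_fixed_of_map_add_eq μ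
  refine ⟨-w, fun S ⟨h, hS⟩ ↦ ?_⟩
  have hSm : Measurable S := (LinearMap.continuous_of_finiteDimensional S).measurable
  have hsymm : μ.map (fun x ↦ S x + h) = μ := by
    have := hS.symm
    rwa [Measure.conv_dirac, Measure.map_map (measurable_add_const h) hSm] at this
  have hh : h = w - S w := eq_sub_of_add_eq' (hw S h hsymm)
  rw [Measure.conv_dirac, Measure.map_map hSm (measurable_add_const _)]
  conv_lhs => rw [← hsymm, Measure.map_map (measurable_add_const _) (hSm.add_const h)]
  congr 1
  ext x
  simp only [Function.comp_apply, map_add, map_neg, hh]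
  abel
end

section
/- Let B ∈ End V for a finite-dimensional real vector space V and let f : ℝ → V be a function satisfying the cocycle equation f(s + t) = e^{tB} f(s) + e^s f(t) for all s, t ∈ ℝ, with f(0) = 0 and such that the derivative v₀ = f'(0) exists. Then f(t) = e^t ∫₀ᵗ e^{s(B − I)} v₀ ds for all t ∈ ℝ. -/
/-!
Shifting the cocycle identity, `f (t + h) = e^{hB} f t + e^t f h`, and differentiating in `h` at
`0` shows that `f` solves the linear ODE `y' = B y + e^t v₀` on all of `ℝ`. The right-hand side
solves the same ODE, because `(B - 1) ∫₀ᵗ e^{s(B-1)} v₀ ds = e^{t(B-1)} v₀ - v₀`, and both vanish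
at `0`; uniqueness of solutions of Lipschitz ODEs finishes the proof.
-/

open NormedSpace

section

variable {V : Type*} [NormedAddCommGroup V] [NormedSpace ℝ V] [CompleteSpace V]

theorem hasDerivAt_exp_smul_apply (A : V →L[ℝ] V) (v : V) (s : ℝ) :
    HasDerivAt (fun u : ℝ => exp (u • A) v) (A (exp (s • A) v)) s := by
  simpa using (hasDerivAt_exp_smul_const' (𝕂 := ℝ) A s).clm_apply (hasDerivAt_const s v)

theorem continuous_exp_smul_apply (A : V →L[ℝ] V) (v : V) :
    Continuous fun s : ℝ => exp (s • A) v :=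
  continuous_iff_continuousAt.2 fun s => (hasDerivAt_exp_smul_apply A v s).continuousAt

theorem hasDerivAt_of_cocycle {B : V →L[ℝ] V} {f : ℝ → V} {v₀ : V}
    (hcoc : ∀ s t : ℝ, f (s + t) = exp (t • B) (f s) + Real.exp s • f t)
    (hderiv : HasDerivAt f v₀ 0) (t : ℝ) :
    HasDerivAt f (B (f t) + Real.exp t • v₀) t := by
  have hshift : HasDerivAt (fun x : ℝ => x - t) 1 t := (hasDerivAt_id t).sub_const t
  have hexp : HasDerivAt (fun x : ℝ => exp ((x - t) • B) (f t)) (B (f t)) t := by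
    simpa [Function.comp_def] using
      (hasDerivAt_exp_smul_apply B (f t) 0).scomp_of_eq t hshift (by ring)
  have hf : HasDerivAt (fun x : ℝ => Real.exp t • f (x - t)) (Real.exp t • v₀) t := by
    simpa [Function.comp_def, Pi.smul_def] using
      (hderiv.scomp_of_eq t hshift (by ring)).const_smul (Real.exp t)
  refine (hexp.add hf).congr_of_eventuallyEq (.of_forall fun x => ?_)
  simpa using hcoc t (x - t)

theorem apply_integral_exp_smul_apply (A : V →L[ℝ] V) (v : V) (t : ℝ) :
    A (∫ s in (0 : ℝ)..t, exp (s • A) v) = exp (t • A) v - v := by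
  rw [← A.intervalIntegral_comp_comm ((continuous_exp_smul_apply A v).intervalIntegrable 0 t),
    intervalIntegral.integral_eq_sub_of_hasDerivAt (fun s _ => hasDerivAt_exp_smul_apply A v s)
      ((A.continuous.comp (continuous_exp_smul_apply A v)).intervalIntegrable 0 t)]
  simp

theorem hasDerivAt_integral_exp_smul_apply (A : V →L[ℝ] V) (v : V) (t : ℝ) :
    HasDerivAt (fun t => ∫ s in (0 : ℝ)..t, exp (s • A) v) (exp (t • A) v) t :=
  (continuous_exp_smul_apply A v).integral_hasStrictDerivAt 0 t |>.hasDerivAt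

theorem hasDerivAt_real_exp_smul_integral_exp_smul_sub_one (B : V →L[ℝ] V) (v : V) (t : ℝ) :
    HasDerivAt (fun t => Real.exp t • ∫ s in (0 : ℝ)..t, exp (s • (B - 1)) v)
      (B (Real.exp t • ∫ s in (0 : ℝ)..t, exp (s • (B - 1)) v) + Real.exp t • v) t := by
  set F := ∫ s in (0 : ℝ)..t, exp (s • (B - 1)) v
  have hBF : B F = exp (t • (B - 1)) v - v + F := by
    rw [← apply_integral_exp_smul_apply (B - 1) v t]
    simp [F]
  refine ((Real.hasDerivAt_exp t).smul
    (hasDerivAt_integral_exp_smul_apply (B - 1) v t)).congr_deriv ?_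
  rw [map_smul, hBF]
  module

end

/-- **Lemma 11.** If `f : ℝ → V` satisfies `f(s+t) = e^{tB} f(s) + e^s f(t)`, `f(0) = 0`,
and `f` is differentiable at `0` with derivative `v₀`, then
`f(t) = e^t ∫₀ᵗ e^{s(B−I)} v₀ ds`. -/
theorem cocycle_solution
    {V : Type*} [NormedAddCommGroup V] [NormedSpace ℝ V] [FiniteDimensional ℝ V]
    (B : V →L[ℝ] V) (f : ℝ → V) (v₀ : V)
    (hcoc : ∀ s t : ℝ, f (s + t) = (NormedSpace.exp (t • B)) (f s) + Real.exp s • f t)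
    (h0 : f 0 = 0) (hderiv : HasDerivAt f v₀ 0) :
    ∀ t : ℝ, f t = Real.exp t • ∫ s in (0:ℝ)..t, (NormedSpace.exp (s • (B - 1))) v₀ := by
  refine congrFun (ODE_solution_unique_univ (t₀ := 0) (s := fun _ => Set.univ)
    (v := fun t x => B x + Real.exp t • v₀)
    (fun t => (B.lipschitz.add (LipschitzWith.const _)).lipschitzOnWith)
    (fun t => ⟨hasDerivAt_of_cocycle hcoc hderiv t, Set.mem_univ _⟩)
    (fun t => ⟨hasDerivAt_real_exp_smul_integral_exp_smul_sub_one B v₀ t, Set.mem_univ _⟩) ?_)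
  simp [h0]
end

section
/- Let B ∈ End V, v₀ ∈ V, and define f(t) = e^t ∫₀ᵗ e^{s(B−I)} v₀ ds. Then the following are equivalent: (i) v₀ is orthogonal to N(B* − I); (ii) there exists v₁ ∈ V such that f(t) = e^{tB} v₁ − e^t v₁ for all t ∈ ℝ; (iii) there exists t₀ ≠ 0 and v₁ ∈ V with f(t₀) = e^{t₀ B} v₁ − e^{t₀} v₁. -/
/-!
Put `A = B - 1`. Since `e^{tB} = e^t e^{tA}`, condition (ii) at time `t` reads
`∫₀ᵗ e^{sA} v₀ ds = e^{tA} v₁ - v₁ = ∫₀ᵗ e^{sA} (A v₁) ds`. If `v₀ ⊥ ker A* = N(B* - I)` then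
`v₀ = A v₁` for some `v₁` (finite dimension), and this holds for every `t`. Conversely, a vector
`u ∈ ker A*` is fixed by `e^{sA*}`, so `⟪u, ∫₀ᵗ e^{sA} w ds⟫ = t ⟪u, w⟫`; pairing (iii) with `u`
gives `t₀ ⟪u, v₀⟫ = t₀ ⟪u, A v₁⟫ = 0`.
-/

open scoped RealInnerProductSpace

open NormedSpace ContinuousLinearMap

theorem NormedSpace.exp_smul_eq_real_exp_smul_exp_smul_sub_one {𝔸 : Type*} [NormedRing 𝔸]
    [NormedAlgebra ℝ 𝔸] [CompleteSpace 𝔸] (a : 𝔸) (t : ℝ) :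
    exp (t • a) = Real.exp t • exp (t • (a - 1)) := by
  let +nondep : NormedAlgebra ℚ 𝔸 := .restrictScalars ℚ ℝ 𝔸
  have hsplit : t • a = algebraMap ℝ 𝔸 t + t • (a - 1) := by
    rw [Algebra.algebraMap_eq_smul_one, ← smul_add, add_sub_cancel]
  rw [hsplit, exp_add_of_commute (Algebra.commutes t _), ← algebraMap_exp_comm,
    ← Real.exp_eq_exp_ℝ, ← Algebra.smul_def]

section Exp

variable {E : Type*} [NormedAddCommGroup E] [NormedSpace ℝ E] [CompleteSpace E]

theorem ContinuousLinearMap.integral_exp_smul_apply_eq_sub (M : E →L[ℝ] E) (w : E) (t : ℝ) :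
    ∫ s in (0 : ℝ)..t, exp (s • M) (M w) = exp (t • M) w - w := by
  have hderiv (s : ℝ) : HasDerivAt (fun s : ℝ => exp (s • M) w) (exp (s • M) (M w)) s := by
    simpa using (hasDerivAt_exp_smul_const M s).clm_apply (hasDerivAt_const s w)
  have hcont : Continuous fun s : ℝ => exp (s • M) (M w) :=
    (differentiable_exp_smul_const ℝ M).continuous.clm_apply continuous_const
  simpa using intervalIntegral.integral_eq_sub_of_hasDerivAt (fun s _ => hderiv s)
    (hcont.intervalIntegrable 0 t)

theorem ContinuousLinearMap.exp_smul_apply_of_apply_eq_zero {M : E →L[ℝ] E} {u : E}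
    (hu : M u = 0) (t : ℝ) : exp (t • M) u = u := by
  have := M.integral_exp_smul_apply_eq_sub u t
  simp only [hu, map_zero, intervalIntegral.integral_zero] at this
  exact sub_eq_zero.mp this.symm

end Exp

section Adjoint

variable {E : Type*} [NormedAddCommGroup E] [InnerProductSpace ℝ E] [CompleteSpace E]

theorem ContinuousLinearMap.adjoint_exp_smul (M : E →L[ℝ] E) (s : ℝ) :
    adjoint (exp (s • M)) = exp (s • adjoint M) := by
  rw [← star_eq_adjoint, star_exp, star_smul, star_trivial, star_eq_adjoint]

theorem ContinuousLinearMap.inner_integral_exp_smul_apply {M : E →L[ℝ] E} {u : E}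
    (hu : adjoint M u = 0) (w : E) (t : ℝ) :
    ⟪u, ∫ s in (0 : ℝ)..t, exp (s • M) w⟫ = t * ⟪u, w⟫ := by
  have hcont : Continuous fun s : ℝ => exp (s • M) w :=
    (differentiable_exp_smul_const ℝ M).continuous.clm_apply continuous_const
  have hfixed (s : ℝ) : ⟪u, exp (s • M) w⟫ = ⟪u, w⟫ := by
    rw [← adjoint_inner_left, adjoint_exp_smul, exp_smul_apply_of_apply_eq_zero hu]
  calc ⟪u, ∫ s in (0 : ℝ)..t, exp (s • M) w⟫
      = ∫ s in (0 : ℝ)..t, ⟪u, exp (s • M) w⟫ :=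
        ((innerSL ℝ u).intervalIntegral_comp_comm (hcont.intervalIntegrable 0 t)).symm
    _ = t * ⟪u, w⟫ := by simp [hfixed]

theorem ContinuousLinearMap.inner_eq_zero_of_integral_exp_smul_apply_eq {M : E →L[ℝ] E}
    {t : ℝ} (ht : t ≠ 0) {w v : E} (h : ∫ s in (0 : ℝ)..t, exp (s • M) w = exp (t • M) v - v)
    {u : E} (hu : adjoint M u = 0) : ⟪u, w⟫ = 0 := by
  have hMv : ⟪u, M v⟫ = 0 := by rw [← adjoint_inner_left, hu, inner_zero_left]
  rw [← M.integral_exp_smul_apply_eq_sub] at h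
  simpa [inner_integral_exp_smul_apply hu, hMv, ht] using congrArg (⟪u, ·⟫) h

theorem ContinuousLinearMap.mem_range_of_orthogonal_ker_adjoint {F : Type*}
    [NormedAddCommGroup F] [InnerProductSpace ℝ F] [FiniteDimensional ℝ F]
    (M : E →L[ℝ] F) {v : F} (h : ∀ u, adjoint M u = 0 → ⟪u, v⟫ = 0) : v ∈ M.range := by
  rw [← Submodule.orthogonal_orthogonal M.range, M.orthogonal_range]
  exact fun u hu => h u hu

end Adjoint

/-- **Proposition 12.** For `f(t) = e^t ∫₀ᵗ e^{s(B−I)} v₀ ds` the following are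
equivalent: (i) `v₀ ⊥ N(B* − I)`; (ii) there is `v₁` with `f(t) = e^{tB}v₁ − e^t v₁`
for all `t`; (iii) there are `t₀ ≠ 0` and `v₁` with `f(t₀) = e^{t₀B}v₁ − e^{t₀} v₁`. -/
theorem centering_tfae
    {V : Type*} [NormedAddCommGroup V] [InnerProductSpace ℝ V] [FiniteDimensional ℝ V]
    (B : V →L[ℝ] V) (v₀ : V) (f : ℝ → V)
    (hf : ∀ t : ℝ, f t = Real.exp t • ∫ s in (0:ℝ)..t, (NormedSpace.exp (s • (B - 1))) v₀) :
    ((∀ v : V, ContinuousLinearMap.adjoint B v = v → ⟪v₀, v⟫ = 0) ↔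
        ∃ v₁ : V, ∀ t : ℝ, f t = (NormedSpace.exp (t • B)) v₁ - Real.exp t • v₁) ∧
      ((∃ v₁ : V, ∀ t : ℝ, f t = (NormedSpace.exp (t • B)) v₁ - Real.exp t • v₁) ↔
        ∃ (t₀ : ℝ) (v₁ : V), t₀ ≠ 0 ∧
          f t₀ = (NormedSpace.exp (t₀ • B)) v₁ - Real.exp t₀ • v₁) := by
  have hfixed (v : V) : adjoint B v = v ↔ adjoint (B - 1) v = 0 := by
    rw [map_sub, adjoint_one, sub_apply, one_apply_eq_self, sub_eq_zero]
  have hf_eq (t : ℝ) (v₁ : V) : f t = exp (t • B) v₁ - Real.exp t • v₁ ↔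
      ∫ s in (0 : ℝ)..t, exp (s • (B - 1)) v₀ = exp (t • (B - 1)) v₁ - v₁ := by
    rw [hf, exp_smul_eq_real_exp_smul_exp_smul_sub_one B t, smul_apply, ← smul_sub,
      smul_right_inj (Real.exp_ne_zero t)]
  have tfae : [∀ v : V, adjoint B v = v → ⟪v₀, v⟫ = 0,
      ∃ v₁ : V, ∀ t : ℝ, f t = exp (t • B) v₁ - Real.exp t • v₁,
      ∃ (t₀ : ℝ) (v₁ : V), t₀ ≠ 0 ∧ f t₀ = exp (t₀ • B) v₁ - Real.exp t₀ • v₁].TFAE := by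
    tfae_have 1 → 2 := fun h => by
      obtain ⟨w, rfl⟩ := (B - 1).mem_range_of_orthogonal_ker_adjoint
        fun u hu => (real_inner_comm _ _).trans (h u ((hfixed u).2 hu))
      exact ⟨w, fun t => (hf_eq t w).2 ((B - 1).integral_exp_smul_apply_eq_sub w t)⟩
    tfae_have 2 → 3 := fun ⟨v₁, h⟩ => ⟨1, v₁, one_ne_zero, h 1⟩
    tfae_have 3 → 1 := fun ⟨t₀, v₁, ht₀, h⟩ u hu =>
      (real_inner_comm _ _).trans <|
        inner_eq_zero_of_integral_exp_smul_apply_eq ht₀ ((hf_eq t₀ v₁).1 h) ((hfixed u).1 hu)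
    tfae_finish
  exact ⟨tfae.out 0 1, tfae.out 1 2⟩
end

section
/- Let V be a finite-dimensional real inner product space, A ∈ Aut V with ‖A‖ < 1, 0 < a < 1, w ∈ V with A*w = a w, and M a Lévy measure on V∖{0} satisfying M(E) = Σ_{n=−∞}^{∞} a^{−n} ∫_{Z_A} 1_E(Aⁿu) M(du) where Z_A = {v : ‖v‖ ≤ 1 and ‖A⁻¹v‖ > 1}. Then (∫_{V∖{0}} ((‖u‖² − ‖Au‖²)/((1+‖Au‖²)(1+‖u‖²))) u M(du), w) = (∫_{Z_A} u M(du), w), assuming all integrals converge absolutely. -/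
/-!
The weight `(‖u‖² - ‖Au‖²) / ((1 + ‖Au‖²)(1 + ‖u‖²))` equals `(1 + ‖Au‖²)⁻¹ - (1 + ‖u‖²)⁻¹`.
The scaling relation presents `M` as `∑ₙ a⁻ⁿ (Aⁿ)₊(M|_Z)`, and `⟪Aⁿu, w⟫ = aⁿ⟪u, w⟫` cancels the
factor `a⁻ⁿ`, so the left-hand side becomes `∑ₙ ∫_Z weight(Aⁿu) ⟪u, w⟫ dM`. For `u ≠ 0` the
weights `weight(Aⁿu)` are nonnegative and telescope over `n ∈ ℤ` to `1`, because `‖Aⁿu‖ → 0` as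
`n → ∞` and `‖Aⁿu‖ → ∞` as `n → -∞`; dominated convergence then moves the sum inside the
integral, leaving `∫_Z ⟪u, w⟫ dM`.
-/

open MeasureTheory Filter Topology
open scoped RealInnerProductSpace ENNReal

theorem sub_sq_div_mul_one_add_sq_eq_inv_sub_inv (x y : ℝ) :
    (x ^ 2 - y ^ 2) / ((1 + y ^ 2) * (1 + x ^ 2)) = (1 + y ^ 2)⁻¹ - (1 + x ^ 2)⁻¹ := by
  field_simp
  ring

theorem Monotone.hasSum_nat_sub {f : ℕ → ℝ} {b : ℝ} (hf : Monotone f)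
    (h : Tendsto f atTop (𝓝 b)) : HasSum (fun n => f (n + 1) - f n) (b - f 0) := by
  rw [hasSum_iff_tendsto_nat_of_nonneg (fun n => sub_nonneg.2 (hf n.le_succ))]
  simpa only [Finset.sum_range_sub] using h.sub_const (f 0)

theorem Monotone.hasSum_int_sub {f : ℤ → ℝ} {b c : ℝ} (hf : Monotone f)
    (h_top : Tendsto (fun n : ℕ => f n) atTop (𝓝 b))
    (h_bot : Tendsto (fun n : ℕ => f (-n)) atTop (𝓝 c)) :
    HasSum (fun n => f (n + 1) - f n) (b - c) := by
  have h_pos := Monotone.hasSum_nat_sub (fun m n h => hf (by exact_mod_cast h)) h_top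
  have h_neg := Monotone.hasSum_nat_sub (f := fun n : ℕ => -f (-n))
    (fun m n h => neg_le_neg (hf (by simpa using h))) h_bot.neg
  rw [show b - c = (b - f 0) + (f 0 - c) by ring]
  refine HasSum.of_nat_of_neg_add_one ?_ ?_
  · simpa using h_pos
  · convert h_neg using 1
    · ext n
      push_cast
      ring_nf
    · rw [Nat.cast_zero, neg_zero]
      ring

section Contraction

variable {V : Type*} [NormedAddCommGroup V] [NormedSpace ℝ V] (A : V ≃L[ℝ] V)

theorem ContinuousLinearEquiv.zpow_add_one_apply (n : ℤ) (v : V) :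
    (A ^ (n + 1)) v = A ((A ^ n) v) := by
  rw [add_comm, zpow_one_add]
  rfl

theorem ContinuousLinearEquiv.norm_pow_apply_le (n : ℕ) (v : V) :
    ‖(A ^ n) v‖ ≤ ‖(A : V →L[ℝ] V)‖ ^ n * ‖v‖ := by
  induction n with
  | zero => exact (one_mul ‖v‖).ge
  | succ n ih =>
    rw [pow_succ', pow_succ', mul_assoc]
    exact (A : V →L[ℝ] V).le_of_opNorm_le_of_le le_rfl ih

theorem ContinuousLinearEquiv.norm_le_pow_mul_norm_zpow_neg_apply (n : ℕ) (v : V) :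
    ‖v‖ ≤ ‖(A : V →L[ℝ] V)‖ ^ n * ‖(A ^ (-n : ℤ)) v‖ := by
  have h := A.norm_pow_apply_le n ((A ^ (-n : ℤ)) v)
  rw [← zpow_natCast, show (A ^ (n : ℤ)) ((A ^ (-n : ℤ)) v) = (A ^ (n : ℤ) * A ^ (-n : ℤ)) v
    from rfl, ← zpow_add, add_neg_cancel, zpow_zero] at h
  exact h

theorem ContinuousLinearEquiv.antitone_norm_zpow_apply (hA : ‖(A : V →L[ℝ] V)‖ ≤ 1) (v : V) :
    Antitone fun n : ℤ => ‖(A ^ n) v‖ :=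
  antitone_int_of_succ_le fun n => by
    rw [A.zpow_add_one_apply]
    exact (A : V →L[ℝ] V).le_of_opNorm_le hA _ |>.trans_eq (one_mul _)

theorem ContinuousLinearEquiv.hasSum_inv_one_add_sq_norm_zpow_apply_sub
    (hA : ‖(A : V →L[ℝ] V)‖ < 1) {v : V} (hv : v ≠ 0) :
    HasSum (fun n : ℤ => (1 + ‖A ((A ^ n) v)‖ ^ 2)⁻¹ - (1 + ‖(A ^ n) v‖ ^ 2)⁻¹) 1 := by
  set f : ℤ → ℝ := fun n => (1 + ‖(A ^ n) v‖ ^ 2)⁻¹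
  have hf : Monotone f := fun m n hmn => by
    have := A.antitone_norm_zpow_apply hA.le v hmn
    dsimp only [f]
    gcongr
  have hpow := tendsto_pow_atTop_nhds_zero_of_lt_one (norm_nonneg _) hA
  have h_top : Tendsto (fun n : ℕ => f n) atTop (𝓝 1) := by
    have h_norm : Tendsto (fun n : ℕ => ‖(A ^ (n : ℤ)) v‖) atTop (𝓝 0) := by
      refine squeeze_zero (fun n => norm_nonneg _) (fun n => ?_) (by simpa using hpow.mul_const ‖v‖)
      rw [zpow_natCast]
      exact A.norm_pow_apply_le n v
    have hcont : Tendsto (fun x : ℝ => (1 + x ^ 2)⁻¹) (𝓝 0) (𝓝 1) := by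
      have : Continuous fun x : ℝ => 1 + x ^ 2 := by fun_prop
      exact (this.inv₀ fun x => by positivity).tendsto' _ _ (by norm_num)
    exact hcont.comp h_norm
  have h_bot : Tendsto (fun n : ℕ => f (-n)) atTop (𝓝 0) := by
    have hv2 : 0 < ‖v‖ ^ 2 := by positivity
    refine squeeze_zero (fun n => by positivity) (fun n => ?_)
      (by simpa using (hpow.pow 2).div_const (‖v‖ ^ 2))
    have h := A.norm_le_pow_mul_norm_zpow_neg_apply n v
    dsimp only [f]
    rw [le_div_iff₀ hv2, inv_mul_le_iff₀ (by positivity)]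
    nlinarith [norm_nonneg v, sq_nonneg (‖(A : V →L[ℝ] V)‖ ^ n)]
  simpa [f, A.zpow_add_one_apply] using hf.hasSum_int_sub h_top h_bot

end Contraction

theorem ContinuousLinearEquiv.inner_zpow_apply_of_adjoint_apply_eq_smul {V : Type*}
    [NormedAddCommGroup V] [InnerProductSpace ℝ V] [CompleteSpace V] (A : V ≃L[ℝ] V) {a : ℝ}
    (ha : a ≠ 0) {w : V} (hw : ContinuousLinearMap.adjoint (A : V →L[ℝ] V) w = a • w)
    (n : ℤ) (v : V) : ⟪(A ^ n) v, w⟫ = a ^ n * ⟪v, w⟫ := by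
  have h_one : ∀ v, ⟪A v, w⟫ = a * ⟪v, w⟫ := fun v => by
    rw [← real_inner_smul_right, ← hw, ContinuousLinearMap.adjoint_inner_right]
    rfl
  induction n using Int.induction_on generalizing v with
  | zero => exact (one_mul _).symm
  | succ n ih => rw [A.zpow_add_one_apply, h_one, ih, zpow_add_one₀ ha, mul_assoc, mul_left_comm]
  | pred n ih =>
    have h := ih v
    rw [← sub_add_cancel (-(n : ℤ)) 1, A.zpow_add_one_apply, h_one, zpow_add_one₀ ha] at h
    exact mul_left_cancel₀ ha (h.trans (by ring))

theorem MeasureTheory.Measure.eq_sum_smul_map {α β ι : Type*} [MeasurableSpace α]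
    [MeasurableSpace β] {M : Measure β} {ν : Measure α} {T : ι → α → β}
    (hT : ∀ n, Measurable (T n)) {c : ι → ℝ≥0∞}
    (h : ∀ E, MeasurableSet E → M E = ∑' n, c n * ν (T n ⁻¹' E)) :
    M = Measure.sum fun n => c n • ν.map (T n) := by
  ext E hE
  rw [h E hE, Measure.sum_apply _ hE]
  exact tsum_congr fun n => by rw [Measure.smul_apply, Measure.map_apply (hT n) hE, smul_eq_mul]

theorem MeasureTheory.hasSum_integral_smul_of_hasSum_one {α ι E : Type*} [MeasurableSpace α]
    {μ : Measure α} [NormedAddCommGroup E] [NormedSpace ℝ E] [Countable ι] {g : ι → α → ℝ}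
    {h : α → E} (hg_meas : ∀ n, AEStronglyMeasurable (g n) μ)
    (hg_nonneg : ∀ n, ∀ᵐ x ∂μ, 0 ≤ g n x) (hg_sum : ∀ᵐ x ∂μ, HasSum (fun n => g n x) 1)
    (hh : Integrable h μ) :
    HasSum (fun n => ∫ x, g n x • h x ∂μ) (∫ x, h x ∂μ) := by
  refine hasSum_integral_of_dominated_convergence (fun n x => g n x * ‖h x‖)
    (fun n => (hg_meas n).smul hh.1) (fun n => ?_) ?_ ?_ ?_
  · filter_upwards [hg_nonneg n] with x hx
    rw [norm_smul, Real.norm_of_nonneg hx]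
  · filter_upwards [hg_sum] with x hx using (hx.mul_right _).summable
  · refine hh.norm.congr ?_
    filter_upwards [hg_sum] with x hx
    rw [(hx.mul_right _).tsum_eq, one_mul]
  · filter_upwards [hg_sum] with x hx
    simpa using hx.smul_const (h x)

theorem ContinuousLinearEquiv.hasSum_integral_inv_one_add_sq_norm_zpow_apply_sub_smul
    {V E : Type*} [NormedAddCommGroup V] [NormedSpace ℝ V] [MeasurableSpace V] [BorelSpace V]
    [NormedAddCommGroup E] [NormedSpace ℝ E] (A : V ≃L[ℝ] V) (hA : ‖(A : V →L[ℝ] V)‖ < 1)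
    {ν : Measure V} (hν : ∀ᵐ v ∂ν, v ≠ 0) {h : V → E} (hh : Integrable h ν) :
    HasSum (fun n : ℤ => ∫ v, ((1 + ‖A ((A ^ n) v)‖ ^ 2)⁻¹ - (1 + ‖(A ^ n) v‖ ^ 2)⁻¹) • h v ∂ν)
      (∫ v, h v ∂ν) := by
  refine hasSum_integral_smul_of_hasSum_one (fun n => Measurable.aestronglyMeasurable (by fun_prop))
    (fun n => ae_of_all _ fun v => ?_) ?_ hh
  · have hle : ‖A ((A ^ n) v)‖ ≤ ‖(A ^ n) v‖ := by
      simpa only [A.zpow_add_one_apply] using A.antitone_norm_zpow_apply hA.le v (lt_add_one n).le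
    exact sub_nonneg.2 (by gcongr)
  · filter_upwards [hν] with v hv using A.hasSum_inv_one_add_sq_norm_zpow_apply_sub hA hv

theorem inner_integral_left {α V : Type*} [MeasurableSpace α] {μ : Measure α}
    [NormedAddCommGroup V] [InnerProductSpace ℝ V] [CompleteSpace V] {F : α → V}
    (hF : Integrable F μ) (w : V) : ⟪∫ x, F x ∂μ, w⟫ = ∫ x, ⟪F x, w⟫ ∂μ := by
  simp_rw [real_inner_comm w, integral_inner hF]

theorem discrete_shift_integral_eq_general
    {V : Type*} [NormedAddCommGroup V] [InnerProductSpace ℝ V]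
    [FiniteDimensional ℝ V] [MeasurableSpace V] [BorelSpace V]
    (A : V ≃L[ℝ] V) (hA : ‖(A : V →L[ℝ] V)‖ < 1)
    (a : ℝ) (ha0 : 0 < a)
    (w : V) (hw : ContinuousLinearMap.adjoint (A : V →L[ℝ] V) w = a • w)
    (M : Measure V)
    (Z : Set V) (hZ : Z = {v : V | ‖v‖ ≤ 1 ∧ 1 < ‖A.symm v‖})
    (hscale : ∀ E : Set V, MeasurableSet E →
      M E = ∑' n : ℤ, ENNReal.ofReal (a ^ (-n)) * M (Z ∩ (fun u => (A ^ n) u) ⁻¹' E))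
    (hint : Integrable
      (fun u => ((‖u‖ ^ 2 - ‖A u‖ ^ 2) / ((1 + ‖A u‖ ^ 2) * (1 + ‖u‖ ^ 2))) • u) M)
    (hintZ : IntegrableOn (fun u => u) Z M) :
    ⟪∫ u, ((‖u‖ ^ 2 - ‖A u‖ ^ 2) / ((1 + ‖A u‖ ^ 2) * (1 + ‖u‖ ^ 2))) • u ∂M, w⟫ =
      ⟪∫ u in Z, u ∂M, w⟫ := by
  simp_rw [sub_sq_div_mul_one_add_sq_eq_inv_sub_inv] at hint ⊢
  set g : V → ℝ := fun u => (1 + ‖A u‖ ^ 2)⁻¹ - (1 + ‖u‖ ^ 2)⁻¹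
  set μ : ℤ → Measure V := fun n => ENNReal.ofReal (a ^ (-n)) • (M.restrict Z).map (A ^ n)
  have hpow_meas (n : ℤ) : Measurable (A ^ n) := (A ^ n).continuous.measurable
  have hZ_meas : MeasurableSet Z := hZ ▸ (measurableSet_le measurable_norm measurable_const).inter
    (measurableSet_lt measurable_const (A.symm.continuous.norm.measurable))
  have hZ_ne : ∀ u ∈ Z, u ≠ 0 := by
    rintro u hu rfl
    norm_num [hZ] at hu
  have hM : M = Measure.sum μ := Measure.eq_sum_smul_map hpow_meas fun E hE =>
    (hscale E hE).trans <| tsum_congr fun n => by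
      rw [Measure.restrict_apply (hpow_meas n hE), Set.inter_comm]
  have h_term (n : ℤ) : ∫ u, g u * ⟪u, w⟫ ∂(μ n) = ∫ u in Z, g ((A ^ n) u) • ⟪u, w⟫ ∂M := by
    rw [integral_smul_measure, integral_map (hpow_meas n).aemeasurable (by fun_prop),
      ENNReal.toReal_ofReal (by positivity), smul_eq_mul, ← integral_const_mul]
    refine integral_congr_ae (ae_of_all _ fun u => ?_)
    dsimp only
    rw [A.inner_zpow_apply_of_adjoint_apply_eq_smul ha0.ne' hw, smul_eq_mul, zpow_neg]
    field_simp
  have h_lhs :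
      HasSum (fun n : ℤ => ∫ u in Z, g ((A ^ n) u) • ⟪u, w⟫ ∂M) (∫ u, g u * ⟪u, w⟫ ∂M) := by
    have hφ : Integrable (fun u => g u * ⟪u, w⟫) (Measure.sum μ) := by
      rw [← hM]
      simpa only [real_inner_smul_left] using hint.inner_const (𝕜 := ℝ) w
    simpa only [← hM, h_term] using hasSum_integral_measure hφ
  have h_rhs := A.hasSum_integral_inv_one_add_sq_norm_zpow_apply_sub_smul hA
    (ae_restrict_of_forall_mem hZ_meas hZ_ne) (hintZ.inner_const (𝕜 := ℝ) w)
  rw [inner_integral_left hint, inner_integral_left hintZ]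
  simp_rw [real_inner_smul_left]
  exact h_lhs.unique h_rhs

/-- **Discrete-case computation in Theorem 13.** For an invertible `A` with `‖A‖ < 1`,
`0 < a < 1`, an eigenvector `A*w = aw`, and a Lévy measure `M` satisfying the scaling
relation `M(E) = Σₙ a^{−n} M(Z_A ∩ A^{−n}E)` over `Z_A = {v : ‖v‖ ≤ 1, ‖A⁻¹v‖ > 1}`,
one has `(∫ (‖u‖² − ‖Au‖²)/((1+‖Au‖²)(1+‖u‖²)) u M(du), w) = (∫_{Z_A} u M(du), w)`. -/
theorem discrete_shift_integral_eq
    {V : Type*} [NormedAddCommGroup V] [InnerProductSpace ℝ V]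
    [FiniteDimensional ℝ V] [MeasurableSpace V] [BorelSpace V]
    (A : V ≃L[ℝ] V) (hA : ‖(A : V →L[ℝ] V)‖ < 1)
    (a : ℝ) (ha0 : 0 < a) (ha1 : a < 1)
    (w : V) (hw : ContinuousLinearMap.adjoint (A : V →L[ℝ] V) w = a • w)
    (M : Measure V) (hM0 : M {0} = 0)
    (hMlevy : ∫⁻ v, ENNReal.ofReal (‖v‖ ^ 2 / (1 + ‖v‖ ^ 2)) ∂M ≠ ⊤)
    (Z : Set V) (hZ : Z = {v : V | ‖v‖ ≤ 1 ∧ 1 < ‖A.symm v‖})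
    (hscale : ∀ E : Set V, MeasurableSet E →
      M E = ∑' n : ℤ, ENNReal.ofReal (a ^ (-n)) * M (Z ∩ (fun u => (A ^ n) u) ⁻¹' E))
    (hint : Integrable
      (fun u => ((‖u‖ ^ 2 - ‖A u‖ ^ 2) / ((1 + ‖A u‖ ^ 2) * (1 + ‖u‖ ^ 2))) • u) M)
    (hintZ : IntegrableOn (fun u => u) Z M) :
    ⟪∫ u, ((‖u‖ ^ 2 - ‖A u‖ ^ 2) / ((1 + ‖A u‖ ^ 2) * (1 + ‖u‖ ^ 2))) • u ∂M, w⟫ =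
      ⟪∫ u in Z, u ∂M, w⟫ :=
  discrete_shift_integral_eq_general A hA a ha0 w hw M Z hZ hscale hint hintZ
end
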